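/- In an augmented merge tree under a minimal vertex perturbation where x passes its parent-direction neighbor y, every child z of y in T_f (i.e., (z,y) ∈ E(T_f), z ≠ x) becomes in T_{f'} either a child of y or a child of x: (z,x) ∈ E(T_{f'}) or (z,y) ∈ E(T_{f'}). -/

import Mathlib

/-- `u` and `w` lie in the same connected component of the vertex set `S`
(connectivity via edges of `G` staying inside `S`). -/
def connIn {V : Type*} (G : SimpleGraph V) (S : Set V) (u w : V) : Prop :=
  u ∈ S ∧ w ∈ S ∧ Relation.ReflTransGen (fun a b => a ∈ S ∧ b ∈ S ∧ G.Adj a b) u w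

/-- Edge `(y,x)` of the augmented merge (split) tree of the field `f`. -/
def mtEdge {V : Type*} (G : SimpleGraph V) (f : V → ℝ) (y x : V) : Prop :=
  (∀ w, connIn G {z | f x < f z} y w → f y ≤ f w) ∧
  ∃ y', connIn G {z | f x < f z} y y' ∧ G.Adj x y'

/-!
Raising `f x` just past `f y` leaves every superlevel set of the field unchanged except those
between the two values: the open superlevel set of `y` in `f`, call it `S`, is the superlevel
set of `x` in `f'`, and the superlevel set of `y` in `f'` is `S ∪ {x}`. A child `z` of `y` is the
minimum of its component `C` in `S`, and `f' = f` on `S`. If `C` has a neighbour of `x`, then `z`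
hangs below `x` in `T_{f'}`. Otherwise adding `x` to `S` does not enlarge `C`, so `z` still
hangs below `y`.
-/

section connIn

variable {V : Type*} {G : SimpleGraph V}

lemma connIn.mono {S T : Set V} (hST : S ⊆ T) {u w : V} (h : connIn G S u w) :
    connIn G T u w :=
  ⟨hST h.1, hST h.2.1,
    Relation.ReflTransGen.mono (fun _ _ hab => ⟨hST hab.1, hST hab.2.1, hab.2.2⟩) _ _ h.2.2⟩

lemma connIn.of_insert {S : Set V} {x z w : V} (hzS : z ∈ S)
    (hnadj : ¬ ∃ x', connIn G S z x' ∧ G.Adj x x') (h : connIn G (insert x S) z w) :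
    connIn G S z w := by
  obtain ⟨-, -, hpath⟩ := h
  induction hpath with
  | refl => exact ⟨hzS, hzS, .refl⟩
  | tail _ hbc ih =>
    obtain ⟨-, hc, hadj⟩ := hbc
    rcases hc with rfl | hc
    · exact absurd ⟨_, ih, hadj.symm⟩ hnadj
    · exact ⟨ih.1, hc, ih.2.2.tail ⟨ih.2.1, hc, hadj⟩⟩

end connIn

lemma mtEdge_of_component_subset {V : Type*} {G : SimpleGraph V} {f f' : V → ℝ} {z y a : V}
    (hz : mtEdge G f z y)
    (hcomp : ∀ w, connIn G {u | f' a < f' u} z w → connIn G {u | f y < f u} z w)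
    (hagree : ∀ w ∈ {u | f y < f u}, f' w = f w)
    (hadj : ∃ a', connIn G {u | f' a < f' u} z a' ∧ G.Adj a a') :
    mtEdge G f' z a := by
  refine ⟨fun w hw => ?_, hadj⟩
  have hzw := hcomp w hw
  rw [hagree z hzw.1, hagree w hzw.2.1]
  exact hz.1 w hzw

section Perturbation

variable {V : Type*} {f f' : V → ℝ} {x y : V}

lemma superlevel_at_moved_eq (hxy : x ≠ y) (hothers : ∀ w, w ≠ x → f' w = f w)
    (h1 : f x < f y) (h2 : f y < f' x)
    (hadjrank : ∀ z, z ≠ x → z ≠ y → f z < f x ∨ f' x < f z) :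
    {u | f' x < f' u} = {u | f y < f u} := by
  ext w
  simp only [Set.mem_ofPred_eq]
  by_cases hwx : w = x
  · subst hwx
    simp only [lt_irrefl, false_iff, not_lt, h1.le]
  by_cases hwy : w = y
  · subst hwy
    simp only [lt_irrefl, iff_false, not_lt, hothers w (Ne.symm hxy), h2.le]
  rw [hothers w hwx]
  rcases hadjrank w hwx hwy with hlt | hgt
  · have hwy : ¬ f y < f w := (hlt.trans h1).not_gt
    exact ⟨fun h => absurd (h2.trans h) hwy, fun h => absurd h hwy⟩
  · exact ⟨fun _ => h2.trans hgt, fun _ => hgt⟩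

lemma superlevel_at_passed_eq_insert (hxy : x ≠ y) (hothers : ∀ w, w ≠ x → f' w = f w)
    (h2 : f y < f' x) :
    {u | f' y < f' u} = insert x {u | f y < f u} := by
  have hfy : f' y = f y := hothers y (Ne.symm hxy)
  ext w
  simp only [Set.mem_ofPred_eq, Set.mem_insert_iff, hfy]
  by_cases hwx : w = x
  · subst hwx
    simp only [h2, true_or]
  · simp only [hothers w hwx, hwx, false_or]

end Perturbation

theorem stmt_8_general {V : Type*} (G : SimpleGraph V) (f f' : V → ℝ)
    (x y : V) (hxy : x ≠ y)
    (hothers : ∀ w, w ≠ x → f' w = f w)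
    (h1 : f x < f y) (h2 : f y < f' x)
    (hadjrank : ∀ z, z ≠ x → z ≠ y → f z < f x ∨ f' x < f z) :
    ∀ z, z ≠ x → mtEdge G f z y → mtEdge G f' z x ∨ mtEdge G f' z y := by
  intro z _ hz
  have hSx := superlevel_at_moved_eq hxy hothers h1 h2 hadjrank
  have hSy := superlevel_at_passed_eq_insert hxy hothers h2
  have hagree : ∀ w ∈ {u | f y < f u}, f' w = f w := fun w hw =>
    hothers w fun hwx => (hwx ▸ hw : f y < f x).not_gt h1
  obtain ⟨y', hzy', hyy'⟩ := hz.2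
  by_cases htouch : ∃ x', connIn G {u | f y < f u} z x' ∧ G.Adj x x'
  · exact .inl <| mtEdge_of_component_subset hz (fun w hw => hSx ▸ hw) hagree (hSx ▸ htouch)
  · refine .inr <| mtEdge_of_component_subset hz (fun w hw => ?_) hagree
      ⟨y', hSy ▸ hzy'.mono (Set.subset_insert _ _), hyy'⟩
    exact (hSy ▸ hw : connIn G _ z w).of_insert hzy'.1 htouch

/-- under a minimal vertex perturbation where `x` passes its neighbor `y`
(`(y,x) ∈ E(T_f)`), every child `z ≠ x` of `y` in `T_f` becomes in `T_{f'}` either a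
child of `y` or a child of `x`. -/
theorem stmt_8 {V : Type*} (G : SimpleGraph V) (f f' : V → ℝ)
    (hf : Function.Injective f) (hf' : Function.Injective f')
    (x y : V) (hxy : x ≠ y)
    (hothers : ∀ w, w ≠ x → f' w = f w)
    (h1 : f x < f y) (h2 : f y < f' x)
    (hadjrank : ∀ z, z ≠ x → z ≠ y → f z < f x ∨ f' x < f z)
    (hedge : mtEdge G f y x) :
    ∀ z, z ≠ x → mtEdge G f z y → mtEdge G f' z x ∨ mtEdge G f' z y :=
  stmt_8_general G f f' x y hxy hothers h1 h2 hadjrank
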